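/- Let ⟨G,p,w⟩ be an energy Büchi game (priorities in {0,1}) with n states and largest absolute weight W ≥ 1, and let Win ⊆ Q be a set of states such that every edge from a player-2 state of Win stays in Win. Suppose there exist: (i) a memoryless strategy σ_gfe whose choices at player-1 states of Win stay in Win and which is good-for-energy in every state of Win, and (ii) a memoryless strategy σ_b whose choices at player-1 states of Win stay in Win and such that every play from a state of Win consistent with σ_b and remaining in Win visits a state of priority 0 within the first n−1 steps. Then player 1 wins the energy Büchi game (energy parity objective) from every state of Win with initial credit (n−1)·W. -/

import Mathlib

variable {Q : Type*}

/-- A play: an infinite path in the edge relation `E`. -/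
def IsPlay (E : Q → Q → Prop) (ρ : ℕ → Q) : Prop :=
  ∀ i, E (ρ i) (ρ (i + 1))

/-- Energy level of the prefix of length `n` of `ρ`. -/
def EL (w : Q → Q → ℤ) (ρ : ℕ → Q) (n : ℕ) : ℤ :=
  ∑ i ∈ Finset.range n, w (ρ i) (ρ (i + 1))

/-- Energy condition with initial credit `c₀`. -/
def EnergyCond (w : Q → Q → ℤ) (c₀ : ℕ) (ρ : ℕ → Q) : Prop :=
  ∀ n, 0 ≤ (c₀ : ℤ) + EL w ρ n

/-- The state `q` occurs infinitely often in `ρ`. -/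
def InfOften (ρ : ℕ → Q) (q : Q) : Prop :=
  ∀ N, ∃ n, N ≤ n ∧ ρ n = q

/-- Parity condition: the minimum priority occurring infinitely often is even. -/
def ParityCond (p : Q → ℕ) (ρ : ℕ → Q) : Prop :=
  ∃ q, InfOften ρ q ∧ Even (p q) ∧ ∀ q', InfOften ρ q' → p q ≤ p q'

/-- The history `ρ 0, …, ρ (i-1)` as a list. -/
def Hist (ρ : ℕ → Q) (i : ℕ) : List Q :=
  (List.range i).map ρ

/-- A (general, history-dependent) strategy for player 1: at every history ending in a
player-1 state `q` it proposes a successor of `q`. -/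
def IsStrategy (Q1 : Set Q) (E : Q → Q → Prop) (σ : List Q → Q → Q) : Prop :=
  ∀ h q, q ∈ Q1 → E q (σ h q)

/-- An outcome of strategy `σ` from `q₀`. -/
def IsOutcome (Q1 : Set Q) (E : Q → Q → Prop) (σ : List Q → Q → Q) (q₀ : Q)
    (ρ : ℕ → Q) : Prop :=
  ρ 0 = q₀ ∧ IsPlay E ρ ∧ ∀ i, ρ i ∈ Q1 → ρ (i + 1) = σ (Hist ρ i) (ρ i)

/-- Player 1 wins the energy parity game from `q₀` (with some finite initial credit). -/
def Player1Wins (Q1 : Set Q) (E : Q → Q → Prop) (p : Q → ℕ) (w : Q → Q → ℤ)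
    (q₀ : Q) : Prop :=
  ∃ σ c₀, IsStrategy Q1 E σ ∧
    ∀ ρ, IsOutcome Q1 E σ q₀ ρ → ParityCond p ρ ∧ EnergyCond w c₀ ρ

/-- An outcome of the memoryless player-1 strategy `σ` from `q₀`. -/
def MemlessOutcome (Q1 : Set Q) (E : Q → Q → Prop) (σ : Q → Q) (q₀ : Q)
    (ρ : ℕ → Q) : Prop :=
  ρ 0 = q₀ ∧ IsPlay E ρ ∧ ∀ i, ρ i ∈ Q1 → ρ (i + 1) = σ (ρ i)

/-- The minimal priority on the cycle `ρ i, …, ρ (i+k)` is even. -/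
def MinPrioEven (p : Q → ℕ) (ρ : ℕ → Q) (i k : ℕ) : Prop :=
  ∃ j ∈ Finset.Icc i (i + k), Even (p (ρ j)) ∧
    ∀ l ∈ Finset.Icc i (i + k), p (ρ j) ≤ p (ρ l)

/-- The memoryless strategy `σ` is good-for-energy in `q`: every cycle of every outcome
of `σ` from `q` has positive energy level, or zero energy level and even minimal
priority. -/
def GoodForEnergy (Q1 : Set Q) (E : Q → Q → Prop) (p : Q → ℕ) (w : Q → Q → ℤ)
    (σ : Q → Q) (q : Q) : Prop :=
  ∀ ρ, MemlessOutcome Q1 E σ q ρ → ∀ i k, 0 < k → ρ i = ρ (i + k) →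
    0 < ∑ j ∈ Finset.Ico i (i + k), w (ρ j) (ρ (j + 1)) ∨
      (∑ j ∈ Finset.Ico i (i + k), w (ρ j) (ρ (j + 1)) = 0 ∧ MinPrioEven p ρ i k)

/-!
Player 1 uses one bit of memory: he plays `σgfe` until the energy level (without the credit)
reaches `c = (n-1)W`, then `σb` until the next visit to a priority-0 state, and so on.
Cutting the cycles out of a `σgfe`-walk leaves a simple path of fewer than `n` edges, and
every cycle has non-negative weight, so a `σgfe` phase loses at most `c`. A `σb` phase
avoids priority 0 and hence lasts fewer than `n-1` steps: starting at level `c` it stays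
at level at least `W`, which pays for the step back to `σgfe`. So the energy never drops below
`-c`. If priority 0 were visited only finitely often, the play would eventually stay in
`σb` forever, which `σb` forbids, or stay in `σgfe` below the threshold; but on
`σgfe`-walks avoiding priority 0 all cycles have positive weight, so the energy level would
be unbounded.
-/

section Walk

def IsWalk (R : Q → Q → Prop) (γ : ℕ → Q) (L : ℕ) : Prop :=
  ∀ j < L, R (γ j) (γ (j + 1))

def removeSegment (γ : ℕ → Q) (i k : ℕ) : ℕ → Q :=
  fun t => if t ≤ i then γ t else γ (t + k)

variable {R : Q → Q → Prop} {γ : ℕ → Q}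

theorem IsWalk.mono {R' : Q → Q → Prop} {L : ℕ} (h : IsWalk R γ L)
    (hRR' : ∀ q q', R q q' → R' q q') : IsWalk R' γ L :=
  fun j hj => hRR' _ _ (h j hj)

theorem IsWalk.shift {M s L : ℕ} (h : IsWalk R γ M) (hsL : s + L ≤ M) :
    IsWalk R (fun t => γ (s + t)) L :=
  fun j hj => h (s + j) (by omega)

theorem IsWalk.removeSegment {L i k : ℕ} (h : IsWalk R γ L) (hik : i + k ≤ L)
    (hcyc : γ i = γ (i + k)) : IsWalk R (removeSegment γ i k) (L - k) := by
  intro j hj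
  unfold _root_.removeSegment
  rcases lt_or_ge j i with hji | hij
  · rw [if_pos hji.le, if_pos (show j + 1 ≤ i by omega)]
    exact h j (by omega)
  · rw [if_neg (by omega : ¬ j + 1 ≤ i), show j + 1 + k = j + k + 1 by omega]
    split_ifs with hj'
    · rw [show j = i by omega, hcyc]; exact h (i + k) (by omega)
    · exact h (j + k) (by omega)

theorem EL_shift (w : Q → Q → ℤ) (s L : ℕ) :
    EL w (fun t => γ (s + t)) L = EL w γ (s + L) - EL w γ s := by
  simp only [EL, Finset.sum_range_add, add_assoc]
  ring

theorem EL_congr {ρ ρ' : ℕ → Q} (w : Q → Q → ℤ) {i : ℕ}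
    (h : ∀ j ≤ i, ρ j = ρ' j) : EL w ρ i = EL w ρ' i :=
  Finset.sum_congr rfl fun j hj => by
    have hj := Finset.mem_range.1 hj
    rw [h j hj.le, h (j + 1) hj]

theorem EL_removeSegment (w : Q → Q → ℤ) {L i k : ℕ} (hik : i + k ≤ L)
    (hcyc : γ i = γ (i + k)) :
    EL w γ L = EL w (removeSegment γ i k) (L - k) + EL w (fun t => γ (i + t)) k := by
  have hprefix : EL w (removeSegment γ i k) i = EL w γ i :=
    EL_congr w fun j hj => if_pos hj
  have hsuffix : (fun t => removeSegment γ i k (i + t)) = fun t => γ (i + k + t) := by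
    funext t
    unfold _root_.removeSegment
    split_ifs with ht
    · rw [show t = 0 by omega, add_zero, add_zero, hcyc]
    · congr 1; omega
  have h1 := EL_shift (γ := removeSegment γ i k) w i (L - k - i)
  have h2 := EL_shift (γ := γ) w i k
  have h3 := EL_shift (γ := γ) w (i + k) (L - k - i)
  rw [hsuffix, h3, hprefix, show i + (L - k - i) = L - k by omega,
    show i + k + (L - k - i) = L by omega] at h1
  rw [h2]
  linarith

theorem exists_cycle_of_card_le [Fintype Q] (γ : ℕ → Q) {L : ℕ} (hL : Fintype.card Q ≤ L) :
    ∃ i k, 0 < k ∧ k ≤ Fintype.card Q ∧ i + k ≤ L ∧ γ i = γ (i + k) := by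
  obtain ⟨a, ha, b, hb, hab, heq⟩ := Finset.exists_ne_map_eq_of_card_lt_of_maps_to
    (s := Finset.range (Fintype.card Q + 1)) (t := Finset.univ) (f := γ) (by simp)
    (fun _ _ => Finset.mem_coe.2 (Finset.mem_univ _))
  rw [Finset.mem_range] at ha hb
  rcases lt_or_gt_of_ne hab with h | h
  · exact ⟨a, b - a, by omega, by omega, by omega, by rwa [Nat.add_sub_cancel' h.le]⟩
  · exact ⟨b, a - b, by omega, by omega, by omega, by rwa [Nat.add_sub_cancel' h.le, eq_comm]⟩

theorem neg_mul_le_EL (w : Q → Q → ℤ) {W : ℤ} {L : ℕ}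
    (hw : ∀ j < L, -W ≤ w (γ j) (γ (j + 1))) : -(L * W) ≤ EL w γ L := by
  have := Finset.card_nsmul_le_sum (Finset.range L) (fun j => w (γ j) (γ (j + 1))) (-W)
    fun j hj => hw j (Finset.mem_range.1 hj)
  simp only [Finset.card_range, nsmul_eq_mul] at this
  unfold EL; linarith

/-- Cut out cycles, each of weight at least `δ k / card Q` for its length `k`, until fewer
than `card Q` edges remain. -/
theorem IsWalk.weight_bound [Fintype Q] (w : Q → Q → ℤ) (W δ : ℕ)
    (hw : ∀ q q', R q q' → -(W : ℤ) ≤ w q q')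
    (hcycle : ∀ γ k, IsWalk R γ k → 0 < k → k ≤ Fintype.card Q → γ 0 = γ k →
      (δ * k : ℤ) ≤ Fintype.card Q * EL w γ k)
    {L : ℕ} (h : IsWalk R γ L) :
    (δ * L : ℤ) ≤ Fintype.card Q * EL w γ L +
      Fintype.card Q * ((Fintype.card Q - 1 : ℕ) * W) + δ * (Fintype.card Q - 1 : ℕ) := by
  induction L using Nat.strong_induction_on generalizing γ with
  | _ L ih =>
  set n := Fintype.card Q
  by_cases hL : L < n
  · have hLn : (L : ℤ) ≤ (n - 1 : ℕ) := by omega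
    have hEL := neg_mul_le_EL w fun j hj => hw _ _ (h j hj)
    have hsimple : (n : ℤ) * (-((n - 1 : ℕ) * W)) ≤ n * (-(L * W)) := by gcongr
    nlinarith
  · obtain ⟨i, k, hk, hkn, hik, hcyc⟩ := exists_cycle_of_card_le γ (not_lt.1 hL)
    have hrest := ih (L - k) (by omega) (h.removeSegment hik hcyc)
    have hloop := hcycle _ k (h.shift hik) hk hkn (by simpa using hcyc)
    rw [EL_removeSegment w hik hcyc, mul_add]
    push_cast [Nat.cast_sub (hik.trans' (Nat.le_add_left k i))] at hrest ⊢
    linarith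

theorem exists_play_of_serial {S : Set Q} (hS : ∀ q ∈ S, ∃ q', R q q' ∧ q' ∈ S)
    {q : Q} (hq : q ∈ S) : ∃ ρ, ρ 0 = q ∧ IsPlay R ρ := by
  classical
  let next q := if h : q ∈ S then Classical.choose (hS q h) else q
  have hnext : ∀ q ∈ S, R q (next q) ∧ next q ∈ S := fun q h => by
    simp only [next, dif_pos h]; exact Classical.choose_spec (hS q h)
  have hmem : ∀ t, next^[t] q ∈ S := fun t => by
    induction t with
    | zero => exact hq
    | succ t ih => rw [Function.iterate_succ_apply']; exact (hnext _ ih).2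
  refine ⟨fun t => next^[t] q, rfl, fun t => ?_⟩
  simp only [Function.iterate_succ_apply']
  exact (hnext _ (hmem t)).1

theorem IsWalk.exists_extension {S : Set Q} (hS : ∀ q ∈ S, ∃ q', R q q' ∧ q' ∈ S)
    {k : ℕ} (h : IsWalk R γ k) (hk : γ k ∈ S) :
    ∃ ρ, IsPlay R ρ ∧ ∀ t ≤ k, ρ t = γ t := by
  obtain ⟨ρ, hρ0, hρ⟩ := exists_play_of_serial hS hk
  refine ⟨fun t => if t ≤ k then γ t else ρ (t - k), fun t => ?_, fun t ht => if_pos ht⟩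
  dsimp only
  split_ifs with h1 h2 h2
  · exact h t (by omega)
  · rw [show t = k by omega, show k + 1 - k = 0 + 1 by omega, ← hρ0]; exact hρ 0
  · omega
  · rw [show t + 1 - k = t - k + 1 by omega]; exact hρ _

end Walk

section ConsistentMoves

variable {Q1 : Set Q} {E : Q → Q → Prop} {Win : Set Q} {σ : Q → Q}

def ConsistentMove (Q1 : Set Q) (E : Q → Q → Prop) (Win : Set Q) (σ : Q → Q) (q q' : Q) :
    Prop :=
  q ∈ Win ∧ E q q' ∧ q' ∈ Win ∧ (q ∈ Q1 → q' = σ q)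

theorem consistentMove_serial (hE : ∀ q, ∃ q', E q q')
    (hclosed : ∀ q ∈ Win, q ∉ Q1 → ∀ q', E q q' → q' ∈ Win)
    (hvalid : ∀ q ∈ Win, q ∈ Q1 → E q (σ q) ∧ σ q ∈ Win) :
    ∀ q ∈ Win, ∃ q', ConsistentMove Q1 E Win σ q q' ∧ q' ∈ Win := by
  intro q hq
  by_cases hq1 : q ∈ Q1
  · obtain ⟨hedge, hmem⟩ := hvalid q hq hq1
    exact ⟨σ q, ⟨hq, hedge, hmem, fun _ => rfl⟩, hmem⟩
  · obtain ⟨q', hedge⟩ := hE q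
    have hmem := hclosed q hq hq1 q' hedge
    exact ⟨q', ⟨hq, hedge, hmem, fun h => absurd h hq1⟩, hmem⟩

theorem IsPlay.memlessOutcome_of_consistentMove {ρ : ℕ → Q}
    (h : IsPlay (ConsistentMove Q1 E Win σ) ρ) : MemlessOutcome Q1 E σ (ρ 0) ρ :=
  ⟨rfl, fun i => (h i).2.1, fun i => (h i).2.2.2⟩

variable {p : Q → ℕ} {w : Q → Q → ℤ} {γ : ℕ → Q} {k : ℕ}

theorem cycle_weight_of_goodForEnergy (hp : ∀ q, p q = 0 ∨ p q = 1)
    (hserial : ∀ q ∈ Win, ∃ q', ConsistentMove Q1 E Win σ q q' ∧ q' ∈ Win)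
    (hgfe : ∀ q ∈ Win, GoodForEnergy Q1 E p w σ q)
    (hγ : IsWalk (ConsistentMove Q1 E Win σ) γ k) (hk : 0 < k) (hcyc : γ 0 = γ k) :
    0 < EL w γ k ∨ (EL w γ k = 0 ∧ ∃ j ≤ k, p (γ j) = 0) := by
  have hγ0 : γ 0 ∈ Win := (hγ 0 hk).1
  obtain ⟨ρ, hρ, hργ⟩ := hγ.exists_extension hserial (hcyc ▸ hγ0)
  have hρ0 : ρ 0 = γ 0 := hργ 0 (Nat.zero_le k)
  have hEL : ∑ j ∈ Finset.Ico 0 (0 + k), w (ρ j) (ρ (j + 1)) = EL w γ k := by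
    rw [zero_add, ← Finset.range_eq_Ico]
    exact EL_congr w hργ
  have hloop : ρ 0 = ρ (0 + k) := by rw [zero_add, hρ0, hργ k le_rfl, hcyc]
  rcases hgfe (γ 0) hγ0 ρ (hρ0 ▸ hρ.memlessOutcome_of_consistentMove) 0 k hk hloop with
    hpos | ⟨hzero, j, hj, heven, -⟩
  · exact Or.inl (hEL ▸ hpos)
  · rw [Finset.mem_Icc, zero_add] at hj
    refine Or.inr ⟨hEL ▸ hzero, j, hj.2, ?_⟩
    rw [← hργ j hj.2]
    exact (hp _).resolve_right fun h1 => by simp [h1] at heven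

theorem length_add_one_lt_of_forall_ne_zero {n : ℕ}
    (hb : ∀ ρ : ℕ → Q, ρ 0 ∈ Win → IsPlay E ρ → (∀ i, ρ i ∈ Win) →
      (∀ i, ρ i ∈ Q1 → ρ (i + 1) = σ (ρ i)) → ∃ i ≤ n - 1, p (ρ i) = 0)
    (hserial : ∀ q ∈ Win, ∃ q', ConsistentMove Q1 E Win σ q q' ∧ q' ∈ Win)
    (hγ : IsWalk (ConsistentMove Q1 E Win σ) γ k) (hγWin : γ k ∈ Win)
    (hne : ∀ j ≤ k, p (γ j) ≠ 0) : k + 1 < n := by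
  obtain ⟨ρ, hρ, hργ⟩ := hγ.exists_extension hserial hγWin
  have hWin : ∀ i, ρ i ∈ Win := fun i => (hρ i).1
  obtain ⟨-, hplay, hcons⟩ := hρ.memlessOutcome_of_consistentMove
  obtain ⟨i, hi, hpi⟩ := hb ρ (hWin 0) hplay hWin hcons
  by_contra! hkn
  exact hne i (by omega) (hργ i (by omega) ▸ hpi)

variable [Fintype Q] {W : ℕ}

theorem neg_le_EL_of_goodForEnergy (hp : ∀ q, p q = 0 ∨ p q = 1)
    (hserial : ∀ q ∈ Win, ∃ q', ConsistentMove Q1 E Win σ q q' ∧ q' ∈ Win)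
    (hgfe : ∀ q ∈ Win, GoodForEnergy Q1 E p w σ q)
    (hWmax : ∀ q q', E q q' → |w q q'| ≤ (W : ℤ))
    (hγ : IsWalk (ConsistentMove Q1 E Win σ) γ k) :
    -(((Fintype.card Q - 1) * W : ℕ) : ℤ) ≤ EL w γ k := by
  have hbound := hγ.weight_bound w W 0 (fun q q' h => neg_le_of_abs_le (hWmax q q' h.2.1))
    fun γ k hγ hk _ hcyc => by
      rcases cycle_weight_of_goodForEnergy hp hserial hgfe hγ hk hcyc with
        h | ⟨h, -⟩ <;> simp only [CharP.cast_eq_zero, zero_mul] <;> positivity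
  have hn : 0 < Fintype.card Q := Fintype.card_pos_iff.2 ⟨γ 0⟩
  push_cast at hbound ⊢
  nlinarith

theorem exists_lt_EL_of_goodForEnergy (hp : ∀ q, p q = 0 ∨ p q = 1)
    (hserial : ∀ q ∈ Win, ∃ q', ConsistentMove Q1 E Win σ q q' ∧ q' ∈ Win)
    (hgfe : ∀ q ∈ Win, GoodForEnergy Q1 E p w σ q)
    (hWmax : ∀ q q', E q q' → |w q q'| ≤ (W : ℤ)) (B : ℤ) :
    ∃ L, ∀ γ, IsWalk (fun q q' => ConsistentMove Q1 E Win σ q q' ∧ p q ≠ 0) γ L →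
      B < EL w γ L := by
  have hcycle : ∀ γ k,
      IsWalk (fun q q' => ConsistentMove Q1 E Win σ q q' ∧ p q ≠ 0) γ k → 0 < k →
      k ≤ Fintype.card Q → γ 0 = γ k →
      ((1 : ℕ) * k : ℤ) ≤ Fintype.card Q * EL w γ k := by
    intro γ k hγ hk hkn hcyc
    rcases cycle_weight_of_goodForEnergy hp hserial hgfe
        (hγ.mono fun _ _ h => h.1) hk hcyc with h | ⟨-, j, hj, hpj⟩
    · push_cast; nlinarith
    · rcases hj.lt_or_eq with hj | rfl
      · exact absurd hpj (hγ j hj).2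
      · exact absurd (hcyc ▸ hpj) (hγ 0 hk).2
  refine ⟨Fintype.card Q * B.toNat + Fintype.card Q * ((Fintype.card Q - 1) * W) +
    Fintype.card Q, fun γ hγ => ?_⟩
  have hbound := hγ.weight_bound w W 1 (fun q q' h => neg_le_of_abs_le (hWmax q q' h.1.2.1))
    hcycle
  have hn : 0 < Fintype.card Q := Fintype.card_pos_iff.2 ⟨γ 0⟩
  have hB := Int.self_le_toNat B
  push_cast [Nat.cast_sub hn] at hbound
  by_contra! hle
  have := mul_le_mul_of_nonneg_left (hle.trans hB) (Nat.cast_nonneg (α := ℤ) (Fintype.card Q))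
  linarith

end ConsistentMoves

section SwitchingStrategy

variable {Q1 : Set Q} {E : Q → Q → Prop} {Win : Set Q} {p : Q → ℕ} {w : Q → Q → ℤ}
  {T : ℤ} {σgfe σb σ₀ : Q → Q}

def InGfeMode (p : Q → ℕ) (w : Q → Q → ℤ) (T : ℤ) (ρ : ℕ → Q) : ℕ → Prop
  | 0 => True
  | i + 1 => p (ρ (i + 1)) = 0 ∨ (InGfeMode p w T ρ i ∧ EL w ρ (i + 1) < T)

theorem inGfeMode_congr {ρ ρ' : ℕ → Q} {i : ℕ} (h : ∀ j ≤ i, ρ j = ρ' j) :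
    InGfeMode p w T ρ i ↔ InGfeMode p w T ρ' i := by
  induction i with
  | zero => rfl
  | succ i ih =>
    simp only [InGfeMode, h (i + 1) le_rfl, EL_congr w h, ih fun j hj => h j (by omega)]

theorem p_ne_zero_of_not_inGfeMode {ρ : ℕ → Q} {i : ℕ} (h : ¬InGfeMode p w T ρ i) :
    p (ρ i) ≠ 0 := by
  cases i with
  | zero => exact absurd trivial h
  | succ i => exact fun h0 => h (Or.inl h0)

theorem not_inGfeMode_succ_iff {ρ : ℕ → Q} {i : ℕ} :
    ¬InGfeMode p w T ρ (i + 1) ↔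
      p (ρ (i + 1)) ≠ 0 ∧ (InGfeMode p w T ρ i → T ≤ EL w ρ (i + 1)) := by
  simp only [InGfeMode, not_or, not_and, not_lt, ne_eq]

open Classical in
noncomputable def switchingStrategy (Win : Set Q) (p : Q → ℕ) (w : Q → Q → ℤ) (T : ℤ)
    (σgfe σb σ₀ : Q → Q) : List Q → Q → Q :=
  fun h q =>
    if q ∈ Win then
      if InGfeMode p w T (fun j => (h ++ [q]).getD j q) h.length then σgfe q else σb q
    else σ₀ q

open Classical in
theorem switchingStrategy_hist (ρ : ℕ → Q) (i : ℕ) :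
    switchingStrategy Win p w T σgfe σb σ₀ (Hist ρ i) (ρ i) =
      if ρ i ∈ Win then (if InGfeMode p w T ρ i then σgfe (ρ i) else σb (ρ i))
      else σ₀ (ρ i) := by
  have hlen : (Hist ρ i).length = i := by simp [Hist]
  have hget : ∀ j ≤ i, (Hist ρ i ++ [ρ i]).getD j (ρ i) = ρ j := by
    intro j hj
    have : Hist ρ i ++ [ρ i] = (List.range (i + 1)).map ρ := by simp [Hist, List.range_succ]
    simp [this, List.getElem?_range (Nat.lt_succ_of_le hj)]
  simp only [switchingStrategy, hlen, inGfeMode_congr hget]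

theorem isStrategy_switchingStrategy (hσ₀ : ∀ q ∈ Q1, E q (σ₀ q))
    (hgfe_valid : ∀ q ∈ Win, q ∈ Q1 → E q (σgfe q) ∧ σgfe q ∈ Win)
    (hb_valid : ∀ q ∈ Win, q ∈ Q1 → E q (σb q) ∧ σb q ∈ Win) :
    IsStrategy Q1 E (switchingStrategy Win p w T σgfe σb σ₀) := by
  intro h q hq1
  unfold switchingStrategy
  split_ifs with hq
  · exact (hgfe_valid q hq hq1).1
  · exact (hb_valid q hq hq1).1
  · exact hσ₀ q hq1

theorem IsOutcome.consistentMove_switchingStrategy {q : Q} {ρ : ℕ → Q}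
    (hclosed : ∀ q ∈ Win, q ∉ Q1 → ∀ q', E q q' → q' ∈ Win)
    (hgfe_valid : ∀ q ∈ Win, q ∈ Q1 → E q (σgfe q) ∧ σgfe q ∈ Win)
    (hb_valid : ∀ q ∈ Win, q ∈ Q1 → E q (σb q) ∧ σb q ∈ Win)
    (hout : IsOutcome Q1 E (switchingStrategy Win p w T σgfe σb σ₀) q ρ) (hq : q ∈ Win)
    (i : ℕ) :
    (InGfeMode p w T ρ i → ConsistentMove Q1 E Win σgfe (ρ i) (ρ (i + 1))) ∧
      (¬InGfeMode p w T ρ i → ConsistentMove Q1 E Win σb (ρ i) (ρ (i + 1))) := by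
  classical
  obtain ⟨hρ0, hplay, hmoves⟩ := hout
  have hstep : ∀ i, ρ i ∈ Win → ρ i ∈ Q1 →
      ρ (i + 1) = if InGfeMode p w T ρ i then σgfe (ρ i) else σb (ρ i) := fun i hw hq1 => by
    rw [hmoves i hq1, switchingStrategy_hist, if_pos hw]
  have hmem : ∀ i, ρ i ∈ Win := fun i => by
    induction i with
    | zero => exact hρ0 ▸ hq
    | succ i ih =>
      by_cases hq1 : ρ i ∈ Q1
      · rw [hstep i ih hq1]
        split_ifs
        exacts [(hgfe_valid _ ih hq1).2, (hb_valid _ ih hq1).2]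
      · exact hclosed _ ih hq1 _ (hplay i)
  exact ⟨fun hm => ⟨hmem i, hplay i, hmem (i + 1), fun hq1 => by
      rw [hstep i (hmem i) hq1, if_pos hm]⟩,
    fun hm => ⟨hmem i, hplay i, hmem (i + 1), fun hq1 => by
      rw [hstep i (hmem i) hq1, if_neg hm]⟩⟩

end SwitchingStrategy

theorem exists_infOften_of_frequently [Finite Q] {ρ : ℕ → Q} {P : Q → Prop}
    (h : ∀ N, ∃ i ≥ N, P (ρ i)) : ∃ q, P q ∧ InfOften ρ q := by
  have hfreq : ∃ᶠ i in Filter.atTop, ∃ q, P q ∧ ρ i = q :=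
    Filter.frequently_atTop.2 fun N =>
      let ⟨i, hi, hP⟩ := h N
      ⟨i, hi, _, hP, rfl⟩
  obtain ⟨q, hq⟩ := Filter.frequently_exists.1 hfreq
  obtain ⟨_, hPq, -⟩ := hq.exists
  exact ⟨q, hPq, Filter.frequently_atTop.1 (hq.mono fun _ h => h.2)⟩

theorem parityCond_of_frequently_eq_zero [Finite Q] {p : Q → ℕ} {ρ : ℕ → Q}
    (h : ∀ N, ∃ i ≥ N, p (ρ i) = 0) : ParityCond p ρ :=
  let ⟨q, hq0, hq⟩ := exists_infOften_of_frequently (P := fun q => p q = 0) h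
  ⟨q, hq, hq0 ▸ Even.zero, fun _ _ => hq0 ▸ Nat.zero_le _⟩

section SwitchingOutcome

variable {Q1 : Set Q} {E : Q → Q → Prop} {Win : Set Q} {p : Q → ℕ} {w : Q → Q → ℤ}
  {σgfe σb : Q → Q} {n W c : ℕ} {ρ : ℕ → Q}
  (hgfeMove : ∀ i, InGfeMode p w c ρ i →
    ConsistentMove Q1 E Win σgfe (ρ i) (ρ (i + 1)))
  (hbMove : ∀ i, ¬InGfeMode p w c ρ i →
    ConsistentMove Q1 E Win σb (ρ i) (ρ (i + 1)))
  (hgfeWalk : ∀ γ k, IsWalk (ConsistentMove Q1 E Win σgfe) γ k →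
    -(c : ℤ) ≤ EL w γ k)
  (hgfeGrowth : ∀ B : ℤ, ∃ L, ∀ γ,
    IsWalk (fun q q' => ConsistentMove Q1 E Win σgfe q q' ∧ p q ≠ 0) γ L → B < EL w γ L)
  (hbWalk : ∀ γ k, IsWalk (ConsistentMove Q1 E Win σb) γ k → γ k ∈ Win →
    (∀ j ≤ k, p (γ j) ≠ 0) → k + 1 < n)
  (hWmax : ∀ q q', E q q' → |w q q'| ≤ (W : ℤ)) (hc : (n - 1) * W ≤ c)

include hgfeMove hgfeWalk in
theorem neg_le_EL_of_gfe_phase {s i : ℕ} (hsi : s ≤ i) (hs : 0 ≤ EL w ρ s)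
    (hphase : ∀ j, s ≤ j → j < i → InGfeMode p w c ρ j) :
    -(c : ℤ) ≤ EL w ρ i := by
  have hloss := hgfeWalk (fun t => ρ (s + t)) (i - s)
    fun j hj => hgfeMove (s + j) (hphase _ (by omega) (by omega))
  rw [EL_shift, Nat.add_sub_cancel' hsi] at hloss
  linarith

include hbMove hbWalk hWmax hc in
theorem le_EL_of_b_phase {s i : ℕ} (hsi : s ≤ i) (hs : (c : ℤ) ≤ EL w ρ s)
    (hphase : ∀ j, s ≤ j → j ≤ i → ¬InGfeMode p w c ρ j) :
    (W : ℤ) ≤ EL w ρ i := by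
  have hwalk : IsWalk (ConsistentMove Q1 E Win σb) (fun t => ρ (s + t)) (i - s) :=
    fun j hj => hbMove (s + j) (hphase _ (by omega) (by omega))
  have hlen := hbWalk _ _ hwalk
    (by rw [Nat.add_sub_cancel' hsi]; exact (hbMove i (hphase i hsi le_rfl)).1)
    fun j hj => p_ne_zero_of_not_inGfeMode (hphase _ (by omega) (by omega))
  have hloss := neg_mul_le_EL w (W := W) fun j hj =>
    neg_le_of_abs_le (hWmax _ _ (hwalk j hj).2.1)
  rw [EL_shift, Nat.add_sub_cancel' hsi] at hloss
  have hshort : (i - s + 1) * W ≤ c :=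
    le_trans (Nat.mul_le_mul_right W (show i - s + 1 ≤ n - 1 by omega)) hc
  linarith

include hbMove hbWalk hWmax hc in
theorem exists_phase_start (i : ℕ) :
    (InGfeMode p w c ρ i → ∃ s ≤ i, 0 ≤ EL w ρ s ∧
      ∀ j, s ≤ j → j ≤ i → InGfeMode p w c ρ j) ∧
    (¬InGfeMode p w c ρ i → ∃ s ≤ i, (c : ℤ) ≤ EL w ρ s ∧
      ∀ j, s ≤ j → j ≤ i → ¬InGfeMode p w c ρ j) := by
  induction i with
  | zero =>
    refine ⟨fun _ => ⟨0, le_rfl, by simp [EL], fun j _ hj => ?_⟩, fun h => absurd trivial h⟩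
    rw [Nat.le_zero.1 hj]; trivial
  | succ i ih =>
    have hstart : ∀ P : ℕ → Prop, P (i + 1) → ∀ j, i + 1 ≤ j → j ≤ i + 1 → P j :=
      fun P h j hj hj' => le_antisymm hj' hj ▸ h
    have hextend : ∀ P : ℕ → Prop, P (i + 1) → ∀ s,
        (∀ j, s ≤ j → j ≤ i → P j) → ∀ j, s ≤ j → j ≤ i + 1 → P j :=
      fun P h s hP j hj hj' => (Nat.le_succ_iff.1 hj').elim (hP j hj) (· ▸ h)
    by_cases hm : InGfeMode p w c ρ i
    · obtain ⟨s, hsi, hs, hphase⟩ := ih.1 hm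
      refine ⟨fun hm' => ⟨s, by omega, hs, hextend _ hm' s hphase⟩, fun hm' => ?_⟩
      exact ⟨i + 1, le_rfl, (not_inGfeMode_succ_iff.1 hm').2 hm, hstart _ hm'⟩
    · obtain ⟨s, hsi, hs, hphase⟩ := ih.2 hm
      refine ⟨fun hm' => ⟨i + 1, le_rfl, ?_, hstart _ hm'⟩,
        fun hm' => ⟨s, by omega, hs, hextend _ hm' s hphase⟩⟩
      have hEL := le_EL_of_b_phase hbMove hbWalk hWmax hc hsi hs hphase
      have hedge := neg_le_of_abs_le (hWmax _ _ (hbMove i hm).2.1)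
      rw [EL, Finset.sum_range_succ, ← EL]
      linarith

include hgfeMove hbMove hgfeWalk hbWalk hWmax hc in
theorem neg_le_EL_of_switching (i : ℕ) : -(c : ℤ) ≤ EL w ρ i := by
  by_cases hm : InGfeMode p w c ρ i
  · obtain ⟨s, hsi, hs, hphase⟩ := (exists_phase_start hbMove hbWalk hWmax hc i).1 hm
    exact neg_le_EL_of_gfe_phase hgfeMove hgfeWalk hsi hs fun j hj hj' => hphase j hj hj'.le
  · obtain ⟨s, hsi, hs, hphase⟩ := (exists_phase_start hbMove hbWalk hWmax hc i).2 hm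
    have := le_EL_of_b_phase hbMove hbWalk hWmax hc hsi hs hphase
    have : (0 : ℤ) ≤ (c : ℤ) := Nat.cast_nonneg _
    linarith

include hgfeMove hbMove hgfeWalk hgfeGrowth hbWalk hWmax hc in
theorem frequently_eq_zero_of_switching (N : ℕ) : ∃ i ≥ N, p (ρ i) = 0 := by
  by_contra! hne
  by_cases hgfe : ∀ i ≥ N, InGfeMode p w c ρ i
  · have hbelow : ∀ i ≥ N, EL w ρ i ≤ (c : ℤ) := by
      intro i hi
      cases i with
      | zero => simp only [EL, Finset.range_zero, Finset.sum_empty]; positivity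
      | succ i => exact ((hgfe (i + 1) hi).resolve_left (hne _ hi)).2.le
    obtain ⟨L, hL⟩ := hgfeGrowth (2 * (c : ℤ))
    have hgain := hL (fun t => ρ (N + t))
      fun j _ => ⟨hgfeMove _ (hgfe _ (by omega)), hne _ (by omega)⟩
    rw [EL_shift] at hgain
    linarith [hbelow (N + L) (by omega),
      neg_le_EL_of_switching hgfeMove hbMove hgfeWalk hbWalk hWmax hc N]
  · simp only [not_forall] at hgfe
    obtain ⟨s, hs, hms⟩ := hgfe
    have hb : ∀ t, ¬InGfeMode p w c ρ (s + t) := by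
      intro t
      induction t with
      | zero => exact hms
      | succ t ih =>
        rw [← add_assoc, not_inGfeMode_succ_iff]
        exact ⟨hne _ (by omega), fun h => absurd h ih⟩
    have := hbWalk (fun t => ρ (s + t)) (n - 1) (fun j _ => hbMove _ (hb j))
      (hbMove _ (hb (n - 1))).1 fun j _ => hne _ (by omega)
    omega

include hgfeMove hbMove hgfeWalk hgfeGrowth hbWalk hWmax hc in
theorem parityCond_energyCond_of_switching [Finite Q] :
    ParityCond p ρ ∧ EnergyCond w c ρ :=
  ⟨parityCond_of_frequently_eq_zero
      (frequently_eq_zero_of_switching hgfeMove hbMove hgfeWalk hgfeGrowth hbWalk hWmax hc),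
    fun i => by linarith [neg_le_EL_of_switching hgfeMove hbMove hgfeWalk hbWalk hWmax hc i]⟩

end SwitchingOutcome

theorem stmt10_general {Q : Type*} [Fintype Q] (Q1 : Set Q) (E : Q → Q → Prop)
    (hE : ∀ q, ∃ q', E q q') (p : Q → ℕ) (w : Q → Q → ℤ)
    (hp : ∀ q, p q = 0 ∨ p q = 1)
    (n W : ℕ) (hn : Fintype.card Q = n)
    (hWmax : ∀ q q', E q q' → |w q q'| ≤ (W : ℤ))
    (Win : Set Q)
    (hclosed : ∀ q ∈ Win, q ∉ Q1 → ∀ q', E q q' → q' ∈ Win)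
    (σgfe : Q → Q)
    (hgfe_valid : ∀ q ∈ Win, q ∈ Q1 → E q (σgfe q) ∧ σgfe q ∈ Win)
    (hgfe : ∀ q ∈ Win, GoodForEnergy Q1 E p w σgfe q)
    (σb : Q → Q)
    (hb_valid : ∀ q ∈ Win, q ∈ Q1 → E q (σb q) ∧ σb q ∈ Win)
    (hb : ∀ ρ : ℕ → Q, ρ 0 ∈ Win → IsPlay E ρ → (∀ i, ρ i ∈ Win) →
      (∀ i, ρ i ∈ Q1 → ρ (i + 1) = σb (ρ i)) → ∃ i ≤ n - 1, p (ρ i) = 0) :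
    ∀ q ∈ Win, ∃ σ : List Q → Q → Q, IsStrategy Q1 E σ ∧
      ∀ ρ, IsOutcome Q1 E σ q ρ → ParityCond p ρ ∧ EnergyCond w ((n - 1) * W) ρ := by
  intro q hq
  subst hn
  obtain ⟨σ₀, hσ₀⟩ : ∃ σ₀ : Q → Q, ∀ q, E q (σ₀ q) :=
    ⟨_, fun q => (hE q).choose_spec⟩
  refine ⟨switchingStrategy Win p w ((Fintype.card Q - 1) * W : ℕ) σgfe σb σ₀,
    isStrategy_switchingStrategy (fun q _ => hσ₀ q) hgfe_valid hb_valid, fun ρ hout => ?_⟩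
  have hmove := hout.consistentMove_switchingStrategy hclosed hgfe_valid hb_valid hq
  have hgfe_serial := consistentMove_serial hE hclosed hgfe_valid
  have hb_serial := consistentMove_serial hE hclosed hb_valid
  exact parityCond_energyCond_of_switching (fun i => (hmove i).1) (fun i => (hmove i).2)
    (fun _ _ => neg_le_EL_of_goodForEnergy hp hgfe_serial hgfe hWmax)
    (exists_lt_EL_of_goodForEnergy hp hgfe_serial hgfe hWmax)
    (fun _ _ => length_add_one_lt_of_forall_ne_zero hb hb_serial) hWmax le_rfl

/-- in an energy Büchi game (priorities in `{0,1}`), if `Win` is closed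
under player-2 edges and there are memoryless strategies `σgfe` (staying in `Win`,
good-for-energy in every state of `Win`) and `σb` (staying in `Win`, forcing a visit to a
priority-0 state within the first `n−1` steps along plays remaining in `Win`), then
player 1 wins the energy parity objective from every state of `Win` with initial credit
`(n−1)·W`. -/
theorem stmt10 {Q : Type*} [Fintype Q] (Q1 : Set Q) (E : Q → Q → Prop)
    (hE : ∀ q, ∃ q', E q q') (p : Q → ℕ) (w : Q → Q → ℤ)
    (hp : ∀ q, p q = 0 ∨ p q = 1)
    (n W : ℕ) (hn : Fintype.card Q = n) (hW : 1 ≤ W)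
    (hWmax : ∀ q q', E q q' → |w q q'| ≤ (W : ℤ))
    (Win : Set Q)
    (hclosed : ∀ q ∈ Win, q ∉ Q1 → ∀ q', E q q' → q' ∈ Win)
    (σgfe : Q → Q)
    (hgfe_valid : ∀ q ∈ Win, q ∈ Q1 → E q (σgfe q) ∧ σgfe q ∈ Win)
    (hgfe : ∀ q ∈ Win, GoodForEnergy Q1 E p w σgfe q)
    (σb : Q → Q)
    (hb_valid : ∀ q ∈ Win, q ∈ Q1 → E q (σb q) ∧ σb q ∈ Win)
    (hb : ∀ ρ : ℕ → Q, ρ 0 ∈ Win → IsPlay E ρ → (∀ i, ρ i ∈ Win) →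
      (∀ i, ρ i ∈ Q1 → ρ (i + 1) = σb (ρ i)) → ∃ i ≤ n - 1, p (ρ i) = 0) :
    ∀ q ∈ Win, ∃ σ : List Q → Q → Q, IsStrategy Q1 E σ ∧
      ∀ ρ, IsOutcome Q1 E σ q ρ → ParityCond p ρ ∧ EnergyCond w ((n - 1) * W) ρ :=
  stmt10_general Q1 E hE p w hp n W hn hWmax Win hclosed σgfe hgfe_valid hgfe σb hb_valid hb
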